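/- Every ω-well-filtered T0 space whose sobrification is first-countable is sober. -/

import Mathlib

/-- A set is saturated if it is the intersection of all open sets containing it. -/
def IsSaturatedSet {X : Type*} [TopologicalSpace X] (A : Set X) : Prop :=
  A = ⋂₀ {U : Set X | IsOpen U ∧ A ⊆ U}

/-- `X` is ω-well-filtered: for every decreasing sequence of nonempty compact saturated
sets with intersection contained in an open `U`, some member is contained in `U`. -/
def OmegaWellFiltered (X : Type*) [TopologicalSpace X] : Prop :=
  ∀ K : ℕ → Set X, (∀ n, (K n).Nonempty ∧ IsCompact (K n) ∧ IsSaturatedSet (K n)) →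
    (∀ n, K (n + 1) ⊆ K n) → ∀ U : Set X, IsOpen U → (⋂ n, K n) ⊆ U → ∃ n, K n ⊆ U

/-- The points of the sobrification: irreducible closed subsets of `X`. -/
def IrrC (X : Type*) [TopologicalSpace X] := {A : Set X // IsIrreducible A ∧ IsClosed A}

/-- The topology of the sobrification `X^s`. -/
def sobTop (X : Type*) [TopologicalSpace X] : TopologicalSpace (IrrC X) :=
  TopologicalSpace.generateFrom
    {s : Set (IrrC X) | ∃ U : Set X, IsOpen U ∧ s = {F : IrrC X | (F.1 ∩ U).Nonempty}}


/-!
Let `A` be an irreducible closed set. A countable neighbourhood basis of `A` in `X^s`, read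
through basic opens `◇W_n` and the embedding `x ↦ closure {x}`, yields a sequence `x_n ∈ A`
converging to every point of `A`. Each tail `{x_k : k ≥ n}` then converges to its first term,
so it is compact, and the saturated tails form a decreasing sequence of compact saturated sets,
each meeting `A`. By ω-well-filteredness their intersection is not contained in the open set
`X \ A`, which gives a point `x₀ ∈ A` lying in every saturated tail. Every open neighbourhood of
a point of `A` contains a tail, hence its saturation, hence `x₀`: so `A = closure {x₀}`.
-/

open Filter Topology Set

namespace IrrC

variable {X : Type*} [TopologicalSpace X]

instance : TopologicalSpace (IrrC X) := sobTop X

def diamond (U : Set X) : Set (IrrC X) := {F | (F.1 ∩ U).Nonempty}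

def ofPoint (x : X) : IrrC X := ⟨closure {x}, isIrreducible_singleton.closure, isClosed_closure⟩

lemma ofPoint_mem_diamond {U : Set X} (hU : IsOpen U) {x : X} :
    ofPoint x ∈ diamond U ↔ x ∈ U :=
  (closure_inter_open_nonempty_iff hU).trans singleton_inter_nonempty

lemma isOpen_diamond {U : Set X} (hU : IsOpen U) : IsOpen (diamond U) :=
  TopologicalSpace.isOpen_generateFrom_of_mem ⟨U, hU, rfl⟩

lemma isTopologicalBasis_diamond :
    TopologicalSpace.IsTopologicalBasis {s : Set (IrrC X) | ∃ U, IsOpen U ∧ s = diamond U} := by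
  refine ⟨?_, ?_, rfl⟩
  · rintro _ ⟨U, hU, rfl⟩ _ ⟨V, hV, rfl⟩ F ⟨hFU, hFV⟩
    refine ⟨diamond (U ∩ V), ⟨U ∩ V, hU.inter hV, rfl⟩, F.2.1.2 U V hU hV hFU hFV, ?_⟩
    rintro G ⟨y, hyG, hyU, hyV⟩
    exact ⟨⟨y, hyG, hyU⟩, ⟨y, hyG, hyV⟩⟩
  · refine sUnion_eq_univ_iff.2 fun F => ⟨diamond univ, ⟨univ, isOpen_univ, rfl⟩, ?_⟩
    simpa [diamond] using F.2.1.1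

lemma exists_seq_tendsto [FirstCountableTopology (IrrC X)] (F : IrrC X) :
    ∃ x : ℕ → X, (∀ n, x n ∈ F.1) ∧ ∀ a ∈ F.1, Tendsto x atTop (𝓝 a) := by
  obtain ⟨s, hs⟩ := (𝓝 F).exists_antitone_basis
  have hW : ∀ n, ∃ W, IsOpen W ∧ F ∈ diamond W ∧ diamond W ⊆ s n := fun n => by
    obtain ⟨_, ⟨W, hW, rfl⟩, hFW, hWs⟩ := isTopologicalBasis_diamond.mem_nhds_iff.1 (hs.mem n)
    exact ⟨W, hW, hFW, hWs⟩
  choose W hW_open hFW hWs using hW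
  choose x hx using hFW
  refine ⟨x, fun n => (hx n).1, fun a ha => tendsto_nhds.2 fun U hU haU => ?_⟩
  obtain ⟨N, -, hN⟩ := hs.toHasBasis.mem_iff.1 ((isOpen_diamond hU).mem_nhds ⟨a, ha, haU⟩)
  filter_upwards [eventually_ge_atTop N] with n hn
  -- `ofPoint (x n) ∈ ◇(W n) ⊆ s n ⊆ s N ⊆ ◇U`, and `ofPoint` pulls `◇U` back to `U`.
  exact (ofPoint_mem_diamond hU).1
    (hN (hs.antitone hn (hWs n ((ofPoint_mem_diamond (hW_open n)).2 (hx n).2))))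

end IrrC

section Saturation

variable {X : Type*} [TopologicalSpace X]

lemma isSaturatedSet_nhdsKer (s : Set X) : IsSaturatedSet (nhdsKer s) := by
  rw [IsSaturatedSet, ← nhdsKer_def, nhdsKer_nhdsKer]

lemma isCompact_range_add_of_tendsto {x : ℕ → X} {n : ℕ} (hx : Tendsto x atTop (𝓝 (x n))) :
    IsCompact (range fun k => x (k + n)) := by
  have h := ((tendsto_add_atTop_iff_nat n).2 hx).isCompact_insert_range
  have hn : x n ∈ range fun k => x (k + n) := ⟨0, by simp⟩
  rwa [insert_eq_of_mem hn] at h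

lemma OmegaWellFiltered.exists_forall_specializes (hX : OmegaWellFiltered X) {A : Set X}
    (hA : IsClosed A) {x : ℕ → X} (hxA : ∀ n, x n ∈ A) (hx : ∀ a ∈ A, Tendsto x atTop (𝓝 a)) :
    ∃ x₀ ∈ A, ∀ a ∈ A, x₀ ⤳ a := by
  set K : ℕ → Set X := fun n => nhdsKer (range fun k => x (k + n))
  have hxK : ∀ n, x n ∈ K n := fun n => subset_nhdsKer ⟨0, by simp⟩
  have hK : ∀ n, (K n).Nonempty ∧ IsCompact (K n) ∧ IsSaturatedSet (K n) := fun n =>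
    ⟨⟨x n, hxK n⟩, IsCompact.nhdsKer_iff.2 (isCompact_range_add_of_tendsto (hx _ (hxA n))),
      isSaturatedSet_nhdsKer _⟩
  have hK_anti : ∀ n, K (n + 1) ⊆ K n := fun n =>
    nhdsKer_mono (range_subset_iff.2 fun k => ⟨k + 1, by simp only [add_assoc, add_comm 1 n]⟩)
  obtain ⟨x₀, hx₀K, hx₀A⟩ : ((⋂ n, K n) ∩ A).Nonempty := by
    by_contra hempty
    obtain ⟨n, hn⟩ := hX K hK hK_anti Aᶜ hA.isOpen_compl fun y hy hyA => hempty ⟨y, hy, hyA⟩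
    exact hn (hxK n) (hxA n)
  refine ⟨x₀, hx₀A, fun a ha => specializes_iff_forall_open.2 fun U hU haU => ?_⟩
  obtain ⟨n, hn⟩ := eventually_atTop.1 ((hx a ha).eventually (hU.mem_nhds haU))
  exact nhdsKer_minimal (range_subset_iff.2 fun k => hn _ (Nat.le_add_left n k)) hU
    (mem_iInter.1 hx₀K n)

end Saturation

lemma quasiSober_of_omegaWellFiltered {X : Type*} [TopologicalSpace X]
    [FirstCountableTopology (IrrC X)] (hX : OmegaWellFiltered X) : QuasiSober X where
  sober {A} hA hA_closed := by
    obtain ⟨x, hxA, hx⟩ := IrrC.exists_seq_tendsto (⟨A, hA, hA_closed⟩ : IrrC X)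
    obtain ⟨x₀, hx₀A, hx₀⟩ := hX.exists_forall_specializes hA_closed hxA hx
    exact ⟨x₀, (closure_minimal (singleton_subset_iff.2 hx₀A) hA_closed).antisymm
      fun a ha => (hx₀ a ha).mem_closure⟩

/-- Every ω-well-filtered T0 space with first-countable sobrification is sober. -/
theorem stmt17 {X : Type*} [TopologicalSpace X] [T0Space X]
    (hwf : OmegaWellFiltered X)
    (h : @FirstCountableTopology (IrrC X) (sobTop X)) :
    ∀ A : Set X, IsIrreducible A → IsClosed A → ∃! x : X, A = closure {x} := by
  have := h
  have := quasiSober_of_omegaWellFiltered hwf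
  intro A hA hA_closed
  obtain ⟨x, hx⟩ := QuasiSober.sober hA hA_closed
  exact ⟨x, hx.symm, fun y hy => IsGenericPoint.eq (hy.symm : IsGenericPoint y A) hx⟩
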